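/- arXiv:2305.20064 — 8 statements merged into one kernel-verified Lean document; each statement's English description precedes it below -/
import Mathlib

section
/- Let G be a finite group, 𝒮 a transversal of conjugacy classes of subgroups of G, and R a torsion-free commutative ring. Then the G-typical ghost map w : (𝒮 → R) → (Subgroup G → R) with coefficients in R itself is injective. -/
open scoped Classical

/-- The number of cosets in `G ⧸ V` fixed by the left-multiplication action of `U`. -/
noncomputable def fixedCosets {G : Type*} [Group G] (U V : Subgroup G) : ℕ :=
  Nat.card {x : G ⧸ V // ∀ u ∈ U, u • x = x}

/-- The `G`-typical ghost map with coefficients in a commutative ring `R` itself,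
defined relative to a transversal `𝒮` of conjugacy classes of subgroups. -/
noncomputable def ghostR {G : Type*} [Group G] {R : Type*} [CommRing R]
    (𝒮 : Finset (Subgroup G)) (n : 𝒮 → R) : Subgroup G → R :=
  fun U => ∑ V ∈ 𝒮.attach,
    fixedCosets U V.1 • n V ^ (Nat.card ↥(V.1) / Nat.card ↥U)

/-- The conjugate subgroup `g V g⁻¹`. -/
def conjSub {G : Type*} [Group G] (g : G) (V : Subgroup G) : Subgroup G :=
  Subgroup.map (MulAut.conj g).toMonoidHom V

lemma card_conjSub {G : Type*} [Group G] (g : G) (V : Subgroup G) :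
    Nat.card (conjSub g V) = Nat.card V :=
  (Nat.card_congr (V.equivMapOfInjective _ (MulAut.conj g).injective).toEquiv).symm

lemma conjSub_one {G : Type*} [Group G] (V : Subgroup G) : conjSub 1 V = V := by
  ext x
  simp [conjSub, Subgroup.mem_map]

lemma conjSub_inv {G : Type*} [Group G] (g : G) (V : Subgroup G) :
    conjSub g⁻¹ (conjSub g V) = V := by
  ext x
  simp only [conjSub, Subgroup.mem_map, MulEquiv.coe_toMonoidHom, MulAut.conj_apply]
  constructor
  · rintro ⟨y, ⟨v, hv, rfl⟩, rfl⟩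
    have : g⁻¹ * (g * v * g⁻¹) * g⁻¹⁻¹ = v := by group
    rw [this]; exact hv
  · intro hx
    exact ⟨g * x * g⁻¹, ⟨x, hx, rfl⟩, by group⟩

lemma fixedCosets_self_pos {G : Type*} [Group G] [Fintype G] (U : Subgroup G) :
    0 < fixedCosets U U := by
  have : Finite (G ⧸ U) := Quotient.finite _
  have : Nonempty {x : G ⧸ U // ∀ u ∈ U, u • x = x} := by
    refine ⟨⟨((1 : G) : G ⧸ U), fun u hu => ?_⟩⟩
    rw [MulAction.Quotient.smul_mk]
    exact (QuotientGroup.eq).mpr (by simpa using U.inv_mem hu)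
  exact Nat.card_pos

lemma exists_le_conj {G : Type*} [Group G] [Fintype G] {U V : Subgroup G}
    (h : fixedCosets U V ≠ 0) : ∃ g : G, U ≤ conjSub g V := by
  have hfin : Finite (G ⧸ V) := Quotient.finite _
  have hne : Nonempty {x : G ⧸ V // ∀ u ∈ U, u • x = x} := by
    by_contra hc
    exact h (Nat.card_eq_zero.mpr (Or.inl (not_nonempty_iff.mp hc)))
  obtain ⟨⟨x, hx⟩⟩ := hne
  obtain ⟨g, rfl⟩ := QuotientGroup.mk_surjective x
  refine ⟨g, fun u hu => ?_⟩
  have h1 := hx u hu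
  rw [MulAction.Quotient.smul_mk, QuotientGroup.eq] at h1
  -- h1 : (u • g)⁻¹ * g ∈ V
  refine ⟨g⁻¹ * u * g, ?_, by simp [MulAut.conj_apply]; group⟩
  have : g⁻¹ * u * g = ((u • g)⁻¹ * g)⁻¹ := by simp [smul_eq_mul]; group
  rw [this]
  exact V.inv_mem h1

theorem stmt4 {G : Type*} [Group G] [Fintype G] {R : Type*} [CommRing R]
    (htf : ∀ k : ℕ, 0 < k → ∀ r : R, k • r = 0 → r = 0)
    (𝒮 : Finset (Subgroup G))
    (hS : ∀ V : Subgroup G, ∃! W, W ∈ 𝒮 ∧ ∃ g : G, conjSub g V = W) :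
    Function.Injective (ghostR (R := R) 𝒮) := by
  intro a b h
  by_contra hne
  have hT : (𝒮.attach.filter (fun V => a V ≠ b V)).Nonempty := by
    by_contra h'
    rw [Finset.not_nonempty_iff_eq_empty, Finset.filter_eq_empty_iff] at h'
    exact hne (funext fun V => not_not.mp (h' (Finset.mem_attach _ V)))
  obtain ⟨V₀, hV₀mem, hmax⟩ :=
    (𝒮.attach.filter (fun V => a V ≠ b V)).exists_max_image (fun V => Nat.card V.1) hT
  have hV₀ne : a V₀ ≠ b V₀ := (Finset.mem_filter.mp hV₀mem).2
  have hUpos : 0 < Nat.card V₀.1 := Nat.card_pos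
  have hterm : ∀ V ∈ 𝒮.attach.erase V₀,
      fixedCosets V₀.1 V.1 • a V ^ (Nat.card V.1 / Nat.card V₀.1) =
      fixedCosets V₀.1 V.1 • b V ^ (Nat.card V.1 / Nat.card V₀.1) := by
    intro V hV
    rcases Nat.eq_zero_or_pos (fixedCosets V₀.1 V.1) with h0 | hpos
    · simp [h0]
    · obtain ⟨g, hg⟩ := exists_le_conj hpos.ne'
      have hcard : Nat.card V₀.1 ≤ Nat.card V.1 := by
        rw [← card_conjSub g V.1]
        exact Subgroup.card_le_of_le hg
      suffices hab : a V = b V by rw [hab]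
      by_contra hab
      have hVmem : V ∈ 𝒮.attach.filter (fun V => a V ≠ b V) :=
        Finset.mem_filter.mpr ⟨Finset.mem_attach _ _, hab⟩
      have hcardeq : Nat.card V.1 = Nat.card V₀.1 := le_antisymm (hmax V hVmem) hcard
      have heq : V₀.1 = conjSub g V.1 :=
        Subgroup.eq_of_le_of_card_ge hg (by rw [card_conjSub, hcardeq])
      obtain ⟨W, _, hWuniq⟩ := hS V₀.1
      have h1 : V.1 = W := hWuniq V.1 ⟨V.2, g⁻¹, by rw [heq, conjSub_inv]⟩
      have h2 : V₀.1 = W := hWuniq V₀.1 ⟨V₀.2, 1, conjSub_one _⟩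
      exact (Finset.mem_erase.mp hV).1 (Subtype.ext (h1.trans h2.symm))
  have h0 : ghostR 𝒮 a V₀.1 = ghostR 𝒮 b V₀.1 := congrFun h V₀.1
  unfold ghostR at h0
  rw [← Finset.add_sum_erase _ _ (Finset.mem_attach 𝒮 V₀),
      ← Finset.add_sum_erase _ _ (Finset.mem_attach 𝒮 V₀),
      Finset.sum_congr rfl hterm] at h0
  have h1 := add_right_cancel h0
  rw [Nat.div_self hUpos, pow_one, pow_one] at h1
  have h2 : fixedCosets V₀.1 V₀.1 • (a V₀ - b V₀) = 0 := by
    rw [smul_sub, h1, sub_self]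
  exact hV₀ne (sub_eq_zero.mp (htf _ (fixedCosets_self_pos _) _ h2))
end

section
/- Let S be a finite group, U a normal subgroup of S, and P a subgroup of S containing U. Then for every integer C, the order of P divides Σ_{v ∈ P} C^{[S : ⟨U,v⟩]}, where ⟨U,v⟩ denotes the subgroup of S generated by U together with v, and [S : ⟨U,v⟩] is its index in S. Equivalently, the sum over the cosets vU in P/U of C^{[S : ⟨U,v⟩]} is divisible by the index [P : U]. -/
open scoped Classical

open Subgroup MulAction
open scoped Pointwise

section Aux

variable {S : Type*} [Group S] [Fintype S]

private lemma fix_zpow {c : ℕ} {U : Subgroup S} [U.Normal] {v : S}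
    {f : S ⧸ U → Fin c} (hf : ∀ x, f (v • x) = f x) :
    ∀ (k : ℤ) (x : S ⧸ U), f (v ^ k • x) = f x := by
  intro k
  induction k using Int.induction_on with
  | zero => simp
  | succ n ih =>
      intro x
      have : v ^ ((n : ℤ) + 1) • x = v • (v ^ (n : ℤ) • x) := by
        rw [← mul_smul, ← zpow_one_add, add_comm]
      rw [this, hf, ih]
  | pred n ih =>
      intro x
      have h1 : v • (v ^ (-(n : ℤ) - 1) • x) = v ^ (-(n : ℤ)) • x := by
        rw [← mul_smul, ← zpow_one_add]
        ring_nf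
      have := hf (v ^ (-(n : ℤ) - 1) • x)
      rw [h1, ih] at this
      exact this.symm

/-- Functions on `S ⧸ U` fixed by `v` correspond to functions on right cosets of `U ⊔ ⟨v⟩`. -/
private noncomputable def fixedEquiv (U : Subgroup S) [U.Normal] (v : S) (c : ℕ) :
    {f : S ⧸ U → Fin c // ∀ x, f (v • x) = f x} ≃
      (Quotient (QuotientGroup.rightRel (U ⊔ Subgroup.zpowers v)) → Fin c) where
  toFun f := Quotient.lift (fun s => f.1 ((s : S) : S ⧸ U)) (by
    intro x y hxy
    have hmem : y * x⁻¹ ∈ U ⊔ Subgroup.zpowers v :=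
      (QuotientGroup.rightRel_apply).mp hxy
    rw [sup_comm] at hmem
    have hmem' : y * x⁻¹ ∈ ((Subgroup.zpowers v : Set S) * (U : Set S)) := by
      rw [← Subgroup.mul_normal]; exact hmem
    obtain ⟨w, hw, u, hu, huw⟩ := Set.mem_mul.mp hmem'
    obtain ⟨k, rfl⟩ := hw
    have hy : y = v ^ k * (u * x) := by
      rw [← mul_assoc, huw]
      group
    have h1 : ((y : S) : S ⧸ U) = v ^ k • ((u * x : S) : S ⧸ U) := by
      rw [hy, MulAction.Quotient.smul_mk, smul_eq_mul]
    have h2 : ((u * x : S) : S ⧸ U) = ((x : S) : S ⧸ U) := by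
      refine QuotientGroup.eq.mpr ?_
      have := (‹U.Normal› : U.Normal).conj_mem u⁻¹ (inv_mem hu) x⁻¹
      simpa [mul_assoc] using this
    simp only [h1, h2, fix_zpow f.2])
  invFun F := ⟨fun x => Quotient.liftOn' x
      (fun s => F (Quotient.mk _ s)) (by
        intro a b hab
        have h : a⁻¹ * b ∈ U := QuotientGroup.leftRel_apply.mp hab
        refine congrArg F (Quotient.sound ?_)
        refine (QuotientGroup.rightRel_apply).mpr ?_
        have : b * a⁻¹ = a * (a⁻¹ * b) * a⁻¹ := by group
        rw [this]
        exact Subgroup.mem_sup_left ((‹U.Normal› : U.Normal).conj_mem _ h a)),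
    by
      intro x
      induction x using QuotientGroup.induction_on with
      | H s =>
        show Quotient.liftOn' ((v * s : S) : S ⧸ U) _ _ = _
        refine congrArg F (Quotient.sound ?_)
        refine (QuotientGroup.rightRel_apply).mpr ?_
        have : s * (v * s)⁻¹ = v⁻¹ := by group
        rw [this]
        exact Subgroup.mem_sup_right (inv_mem (Subgroup.mem_zpowers v))⟩
  left_inv f := by
    ext x
    induction x using QuotientGroup.induction_on with
    | H s => rfl
  right_inv F := by
    funext x
    induction x using Quotient.ind with
    | _ s => rfl

private lemma card_fixed (U : Subgroup S) [U.Normal] (v : S) (c : ℕ) :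
    Nat.card {f : S ⧸ U → Fin c // ∀ x, f (v • x) = f x}
      = c ^ (U ⊔ Subgroup.zpowers v).index := by
  rw [Nat.card_congr (fixedEquiv U v c)]
  rw [Nat.card_fun, Nat.card_eq_fintype_card (α := Fin c), Fintype.card_fin]
  congr 1
  rw [Subgroup.index_eq_card]
  exact Nat.card_congr (QuotientGroup.quotientRightRelEquivQuotientLeftRel _)

private lemma nat_version (U P : Subgroup S) [U.Normal] (c : ℕ) :
    Fintype.card ↥P ∣ ∑ v : ↥P, c ^ (U ⊔ Subgroup.zpowers (v : S)).index := by
  classical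
  let β := S ⧸ U → Fin c
  haveI : Fintype (↥P)ᵈᵐᵃ := Fintype.ofEquiv _ DomMulAct.mk
  have burn := MulAction.sum_card_fixedBy_eq_card_orbits_mul_card_group (G := (↥P)ᵈᵐᵃ) (X := β)
  have hcard : Fintype.card (↥P)ᵈᵐᵃ = Fintype.card ↥P :=
    Fintype.card_congr DomMulAct.mk.symm
  have hsum : (∑ a : (↥P)ᵈᵐᵃ, Fintype.card (fixedBy β a))
      = ∑ v : ↥P, c ^ (U ⊔ Subgroup.zpowers (v : S)).index := by
    rw [← Equiv.sum_comp (DomMulAct.mk (M := ↥P))]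
    refine Finset.sum_congr rfl fun v _ => ?_
    have hEq : fixedBy β (DomMulAct.mk v) ≃ {f : S ⧸ U → Fin c // ∀ x, f ((v : S) • x) = f x} := by
      refine Equiv.subtypeEquiv (Equiv.refl _) fun f => ?_
      simp only [Equiv.refl_apply, MulAction.mem_fixedBy]
      constructor
      · intro h x
        have := congrFun h x
        exact this
      · intro h
        funext x
        exact h x
    rw [← Nat.card_eq_fintype_card, Nat.card_congr hEq, card_fixed]
  rw [hsum] at burn
  rw [burn, hcard]
  exact dvd_mul_left _ _

end Aux

theorem stmt6 {S : Type*} [Group S] [Fintype S] (U P : Subgroup S) [U.Normal]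
    (hUP : U ≤ P) (C : ℤ) :
    (Nat.card ↥P : ℤ) ∣ ∑ v : ↥P, C ^ (U ⊔ Subgroup.zpowers (v : S)).index := by
  classical
  set n : ℕ := Nat.card ↥P with hn
  have hpos : 0 < n := Nat.card_pos
  haveI : NeZero n := ⟨hpos.ne'⟩
  set c : ℕ := (C % (n : ℤ)).toNat with hc
  have hcast : ((c : ℕ) : ZMod n) = (C : ZMod n) := by
    have h1 : ((c : ℕ) : ℤ) = C % (n : ℤ) :=
      Int.toNat_of_nonneg (Int.emod_nonneg _ (by exact_mod_cast hpos.ne'))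
    have h2 : ((c : ℕ) : ZMod n) = (((c : ℕ) : ℤ) : ZMod n) := by push_cast; ring
    rw [h2, h1]
    exact (ZMod.intCast_eq_intCast_iff _ _ _).mpr (Int.emod_emod_of_dvd C dvd_rfl)
  rw [← ZMod.intCast_zmod_eq_zero_iff_dvd]
  push_cast
  rw [← hcast]
  have hnat := nat_version U P c
  calc (∑ v : ↥P, ((c : ℕ) : ZMod n) ^ (U ⊔ Subgroup.zpowers (v : S)).index)
      = ((∑ v : ↥P, c ^ (U ⊔ Subgroup.zpowers (v : S)).index : ℕ) : ZMod n) := by push_cast; ring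
    _ = 0 := by
        rw [ZMod.natCast_eq_zero_iff]
        rw [hn, Nat.card_eq_fintype_card]
        exact hnat
end

section
/- Let p be a prime, σ a type, and T = MvPolynomial σ ℤ. Let n be a natural number and a : ℕ → T. Then the following are equivalent: (i) for every k with 0 ≤ k ≤ n, the element a_k + Σ_{l=1}^{k} (p^l − p^{l−1}) · (expand p^l)(a_{k−l}) lies in p^k·T; (ii) for every k with 1 ≤ k ≤ n, the element a_k − (expand p)(a_{k−1}) lies in p^k·T. -/
open MvPolynomial Finset

private lemma expand_expand' {σ : Type*} (p q : ℕ) (f : MvPolynomial σ ℤ) :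
    expand p (expand q f) = expand (q * p) f := by
  rw [← AlgHom.comp_apply]
  have : (expand p).comp (expand q) = (expand (q * p) : MvPolynomial σ ℤ →ₐ[ℤ] _) := by
    apply algHom_ext
    intro i
    simp only [AlgHom.comp_apply, map_pow, expand_X]
    rw [mul_comm, pow_mul]
  rw [this]

private noncomputable def B {σ : Type*} (p : ℕ) (a : ℕ → MvPolynomial σ ℤ) (k : ℕ) :
    MvPolynomial σ ℤ :=
  a k + ∑ l ∈ Finset.Icc 1 k,
      ((p ^ l - p ^ (l - 1) : ℕ) : MvPolynomial σ ℤ) * MvPolynomial.expand (p ^ l) (a (k - l))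

private lemma key (p : ℕ) (hp : p.Prime) {σ : Type*} (a : ℕ → MvPolynomial σ ℤ) (k : ℕ) :
    B p a (k + 1) = (a (k + 1) - expand p (a k)) + p * expand p (B p a k) := by
  have hp1 : 1 ≤ p := hp.one_le
  have hins : Finset.Icc 1 (k + 1) = insert 1 (Finset.Icc 2 (k + 1)) := by
    ext x
    simp only [Finset.mem_Icc, Finset.mem_insert]
    omega
  have hmap : Finset.Icc 2 (k + 1) = (Finset.Icc 1 k).map (addRightEmbedding 1) := by
    rw [Finset.map_add_right_Icc]
  have hsum : ∑ l ∈ Finset.Icc 2 (k + 1),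
      ((p ^ l - p ^ (l - 1) : ℕ) : MvPolynomial σ ℤ) * expand (p ^ l) (a (k + 1 - l))
      = ∑ m ∈ Finset.Icc 1 k,
      ((p ^ (m + 1) - p ^ m : ℕ) : MvPolynomial σ ℤ) * expand (p ^ (m + 1)) (a (k - m)) := by
    rw [hmap, Finset.sum_map]
    apply Finset.sum_congr rfl
    intro m hm
    simp only [addRightEmbedding_apply, Nat.add_sub_cancel, Nat.succ_sub_succ, Nat.sub_zero]
  have hexp : p * expand p (B p a k)
      = p * expand p (a k) + ∑ m ∈ Finset.Icc 1 k,
        ((p ^ (m + 1) - p ^ m : ℕ) : MvPolynomial σ ℤ) * expand (p ^ (m + 1)) (a (k - m)) := by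
    rw [B, map_add, map_sum, mul_add, Finset.mul_sum]
    rw [add_right_inj]
    apply Finset.sum_congr rfl
    intro m hm
    simp only [Finset.mem_Icc] at hm
    obtain ⟨j, rfl⟩ : ∃ j, m = j + 1 := ⟨m - 1, by omega⟩
    rw [map_mul, expand_expand', map_natCast, ← mul_assoc, ← Nat.cast_mul, ← pow_succ]
    congr 2
    simp only [Nat.add_sub_cancel]
    rw [Nat.mul_sub, ← pow_succ', ← pow_succ']
  rw [B, hins, Finset.sum_insert (by simp), hsum, hexp]
  have h1 : ((p ^ 1 - p ^ (1 - 1) : ℕ) : MvPolynomial σ ℤ) = (p : MvPolynomial σ ℤ) - 1 := by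
    simp [Nat.cast_sub hp1]
  rw [h1]
  simp only [pow_one, Nat.add_sub_cancel]
  ring

theorem stmt7 (p : ℕ) (hp : p.Prime) {σ : Type*} (n : ℕ) (a : ℕ → MvPolynomial σ ℤ) :
    (∀ k ≤ n, (p : MvPolynomial σ ℤ) ^ k ∣
        a k + ∑ l ∈ Finset.Icc 1 k,
          ((p ^ l - p ^ (l - 1) : ℕ) : MvPolynomial σ ℤ) *
            MvPolynomial.expand (p ^ l) (a (k - l))) ↔
      ∀ k, 1 ≤ k → k ≤ n →
        (p : MvPolynomial σ ℤ) ^ k ∣ (a k - MvPolynomial.expand p (a (k - 1))) := by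
  have hBdef : ∀ k, a k + ∑ l ∈ Finset.Icc 1 k,
      ((p ^ l - p ^ (l - 1) : ℕ) : MvPolynomial σ ℤ) *
        MvPolynomial.expand (p ^ l) (a (k - l)) = B p a k := fun k => rfl
  simp only [hBdef]
  constructor
  · intro h k hk1 hkn
    obtain ⟨m, rfl⟩ : ∃ m, k = m + 1 := ⟨k - 1, by omega⟩
    have h1 := h (m + 1) hkn
    have h2 := h m (by omega)
    obtain ⟨c, hc⟩ := h2
    have hdvd : (p : MvPolynomial σ ℤ) ^ (m + 1) ∣ p * expand p (B p a m) := by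
      refine ⟨expand p c, ?_⟩
      rw [hc, map_mul, map_pow, map_natCast, pow_succ]
      ring
    have := key p hp a m
    have : a (m + 1) - expand p (a m) = B p a (m + 1) - p * expand p (B p a m) := by
      rw [this]; ring
    simp only [Nat.add_sub_cancel]
    rw [this]
    exact dvd_sub h1 hdvd
  · intro h k
    induction k with
    | zero => intro; simp
    | succ m ih =>
      intro hk
      rw [key p hp a m]
      apply dvd_add
      · have := h (m + 1) (by omega) hk
        simpa using this
      · obtain ⟨c, hc⟩ := ih (by omega)
        refine ⟨expand p c, ?_⟩
        rw [hc, map_mul, map_pow, map_natCast, pow_succ]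
        ring
end

section
/- Let p be a prime, R a commutative ring, φ : R → R a Frobenius lift, and n a positive natural number. An n-tuple a = (a_0, …, a_{n−1}) of elements of R lies in the image of the n-truncated p-typical ghost map w if and only if a_j − φ(a_{j−1}) lies in the ideal generated by p^j for every j with 1 ≤ j ≤ n−1. -/
/-- The `n`-truncated `p`-typical ghost map: the `j`-th component is
`w_j(x) = Σ_{0 ≤ i ≤ j} p^i * x_i ^ p^(j-i)`. -/
def pGhost (p : ℕ) {R : Type*} [CommRing R] {n : ℕ} (x : Fin n → R) : Fin n → R :=
  fun j => ∑ i ∈ Finset.Iic j, (p : R) ^ (i : ℕ) * x i ^ p ^ ((j : ℕ) - (i : ℕ))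

/-- Untruncated ghost components, indexed by `ℕ`. -/
private def Wgh (p : ℕ) {R : Type*} [CommRing R] (x : ℕ → R) (j : ℕ) : R :=
  ∑ i ∈ Finset.range (j + 1), (p : R) ^ i * x i ^ p ^ (j - i)

private lemma Wgh_congr {p : ℕ} {R : Type*} [CommRing R] {x y : ℕ → R} {j : ℕ}
    (h : ∀ i ≤ j, x i = y i) : Wgh p x j = Wgh p y j := by
  refine Finset.sum_congr rfl fun i hi => ?_
  rw [h i (by have := Finset.mem_range.mp hi; omega)]

private lemma pGhost_eq_Wgh (p : ℕ) {R : Type*} [CommRing R] {n : ℕ} (x : Fin n → R)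
    (y : ℕ → R) (hxy : ∀ i : Fin n, y i = x i) (j : Fin n) :
    pGhost p x j = Wgh p y (j : ℕ) := by
  unfold pGhost Wgh
  have hr : Finset.range ((j : ℕ) + 1) = Finset.Iic (j : ℕ) := by
    ext k; simp [Nat.lt_succ_iff]
  rw [hr, ← Fin.map_valEmbedding_Iic, Finset.sum_map]
  refine Finset.sum_congr rfl fun i _ => ?_
  simp [hxy i]

private lemma Wgh_dvd (p : ℕ) {R : Type*} [CommRing R] (φ : R →+* R)
    (hφ : ∀ r : R, (p : R) ∣ φ r - r ^ p) (x : ℕ → R) (j : ℕ) :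
    (p : R) ^ (j + 1) ∣ Wgh p x (j + 1) - φ (Wgh p x j) := by
  unfold Wgh
  rw [map_sum, Finset.sum_range_succ]
  have hφ' : ∀ i ∈ Finset.range (j + 1),
      φ ((p : R) ^ i * x i ^ p ^ (j - i)) = (p : R) ^ i * (φ (x i)) ^ p ^ (j - i) := by
    intro i _; rw [map_mul, map_pow, map_pow, map_natCast]
  rw [Finset.sum_congr rfl hφ']
  have key : ∀ i ∈ Finset.range (j + 1),
      (p : R) ^ (j + 1) ∣
        (p : R) ^ i * x i ^ p ^ (j + 1 - i) - (p : R) ^ i * (φ (x i)) ^ p ^ (j - i) := by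
    intro i hi
    have hij : i ≤ j := by have := Finset.mem_range.mp hi; omega
    rw [← mul_sub]
    have h1 : x i ^ p ^ (j + 1 - i) = (x i ^ p) ^ p ^ (j - i) := by
      rw [← pow_mul, ← pow_succ']
      congr 2
      omega
    have h2 : (p : R) ∣ x i ^ p - φ (x i) := by
      have := hφ (x i)
      exact (dvd_sub_comm).mp this
    have h3 : (p : R) ^ (j - i + 1) ∣ (x i ^ p) ^ p ^ (j - i) - (φ (x i)) ^ p ^ (j - i) :=
      dvd_sub_pow_of_dvd_sub h2 (j - i)
    have : (p : R) ^ (j + 1) = (p : R) ^ i * (p : R) ^ (j - i + 1) := by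
      rw [← pow_add]; congr 1; omega
    rw [this, h1]
    exact mul_dvd_mul_left _ h3
  have hsum : (p : R) ^ (j + 1) ∣
      (∑ i ∈ Finset.range (j + 1), (p : R) ^ i * x i ^ p ^ (j + 1 - i)) -
        ∑ i ∈ Finset.range (j + 1), (p : R) ^ i * (φ (x i)) ^ p ^ (j - i) := by
    rw [← Finset.sum_sub_distrib]
    exact Finset.dvd_sum key
  have : (∑ i ∈ Finset.range (j + 1), (p : R) ^ i * x i ^ p ^ (j + 1 - i)) +
      (p : R) ^ (j + 1) * x (j + 1) ^ p ^ (j + 1 - (j + 1)) -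
      ∑ i ∈ Finset.range (j + 1), (p : R) ^ i * (φ (x i)) ^ p ^ (j - i) =
      ((∑ i ∈ Finset.range (j + 1), (p : R) ^ i * x i ^ p ^ (j + 1 - i)) -
        ∑ i ∈ Finset.range (j + 1), (p : R) ^ i * (φ (x i)) ^ p ^ (j - i)) +
      (p : R) ^ (j + 1) * x (j + 1) ^ p ^ (j + 1 - (j + 1)) := by ring
  rw [this]
  exact dvd_add hsum (Dvd.intro _ rfl)

private lemma Wgh_exists (p : ℕ) {R : Type*} [CommRing R] (φ : R →+* R)
    (hφ : ∀ r : R, (p : R) ∣ φ r - r ^ p) (a : ℕ → R) (m : ℕ)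
    (ha : ∀ k, k + 1 ≤ m → (p : R) ^ (k + 1) ∣ a (k + 1) - φ (a k)) :
    ∃ x : ℕ → R, ∀ j ≤ m, Wgh p x j = a j := by
  induction m with
  | zero =>
    refine ⟨fun _ => a 0, fun j hj => ?_⟩
    interval_cases j
    simp [Wgh]
  | succ m ih =>
    obtain ⟨x, hx⟩ := ih (fun k hk => ha k (by omega))
    have h1 := Wgh_dvd p φ hφ x m
    rw [hx m le_rfl] at h1
    have h2 := ha m le_rfl
    set S := ∑ i ∈ Finset.range (m + 1), (p : R) ^ i * x i ^ p ^ (m + 1 - i) with hS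
    have hW : Wgh p x (m + 1) = S + (p : R) ^ (m + 1) * x (m + 1) := by
      unfold Wgh
      rw [Finset.sum_range_succ]
      simp [hS]
    have h3 : (p : R) ^ (m + 1) ∣ a (m + 1) - S := by
      have h4 := dvd_sub h2 h1
      have heq : a (m + 1) - S = (a (m + 1) - φ (a m)) - (Wgh p x (m + 1) - φ (a m)) +
          (p : R) ^ (m + 1) * x (m + 1) := by rw [hW]; ring
      rw [heq]
      exact dvd_add h4 (Dvd.intro _ rfl)
    obtain ⟨c, hc⟩ := h3
    refine ⟨Function.update x (m + 1) c, fun j hj => ?_⟩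
    rcases Nat.lt_or_ge j (m + 1) with hj' | hj'
    · rw [Wgh_congr (y := x) fun i hi => Function.update_of_ne (by omega) _ _]
      exact hx j (by omega)
    · have hjm : j = m + 1 := by omega
      subst hjm
      unfold Wgh
      rw [Finset.sum_range_succ]
      have hsum : ∑ i ∈ Finset.range (m + 1),
          (p : R) ^ i * (Function.update x (m + 1) c) i ^ p ^ (m + 1 - i) = S := by
        refine Finset.sum_congr rfl fun i hi => ?_
        have := Finset.mem_range.mp hi
        rw [Function.update_of_ne (by omega)]
      rw [hsum, Function.update_self]
      simp only [Nat.sub_self, pow_zero, pow_one]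
      linear_combination -hc

theorem stmt8 (p : ℕ) (hp : p.Prime) {R : Type*} [CommRing R] (φ : R →+* R)
    (hφ : ∀ r : R, φ r - r ^ p ∈ Ideal.span {(p : R)})
    (n : ℕ) (hn : 0 < n) (a : Fin n → R) :
    a ∈ Set.range (pGhost p (R := R) (n := n)) ↔
      ∀ j : Fin n, 1 ≤ (j : ℕ) →
        a j - φ (a ⟨(j : ℕ) - 1, lt_of_le_of_lt (Nat.sub_le _ _) j.isLt⟩) ∈
          Ideal.span {(p : R) ^ (j : ℕ)} := by
  have hφ' : ∀ r : R, (p : R) ∣ φ r - r ^ p := fun r =>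
    (Ideal.mem_span_singleton).mp (hφ r)
  constructor
  · rintro ⟨x, rfl⟩ j hj
    set y : ℕ → R := fun i => if h : i < n then x ⟨i, h⟩ else 0 with hy
    have hxy : ∀ i : Fin n, y i = x i := fun i => by simp [hy, i.isLt]
    rw [Ideal.mem_span_singleton]
    have e1 : pGhost p x j = Wgh p y (j : ℕ) := pGhost_eq_Wgh p x y hxy j
    have e2 : pGhost p x ⟨(j : ℕ) - 1, lt_of_le_of_lt (Nat.sub_le _ _) j.isLt⟩ =
        Wgh p y ((j : ℕ) - 1) := pGhost_eq_Wgh p x y hxy _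
    rw [e1, e2]
    obtain ⟨k, hk⟩ : ∃ k, (j : ℕ) = k + 1 := ⟨(j : ℕ) - 1, by omega⟩
    rw [hk]
    simp only [Nat.add_sub_cancel]
    exact Wgh_dvd p φ hφ' y k
  · intro h
    set b : ℕ → R := fun k => if hk : k < n then a ⟨k, hk⟩ else 0 with hb
    have hba : ∀ k, (hk : k < n) → b k = a ⟨k, hk⟩ := fun k hk => by simp [hb, hk]
    obtain ⟨x, hx⟩ := Wgh_exists p φ hφ' b (n - 1) (by
      intro k hk
      have hk1 : k + 1 < n := by omega
      have hk0 : k < n := by omega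
      have := h ⟨k + 1, hk1⟩ (by simp)
      rw [Ideal.mem_span_singleton] at this
      simpa [hba (k + 1) hk1, hba k hk0] using this)
    refine ⟨fun i => x (i : ℕ), funext fun j => ?_⟩
    have e1 : pGhost p (fun i : Fin n => x (i : ℕ)) j = Wgh p x (j : ℕ) :=
      pGhost_eq_Wgh p _ x (fun i => rfl) j
    rw [e1, hx (j : ℕ) (by have := j.isLt; omega)]
    exact hba (j : ℕ) j.isLt
end

section
/- Let p be a prime, R a commutative ring admitting a Frobenius lift φ : R → R, and n a positive natural number. Then the image of the n-truncated p-typical ghost map w : Rⁿ → Rⁿ is a subring of the product ring Rⁿ with componentwise operations: it contains the multiplicative unit (the constant tuple 1) and is closed under subtraction and multiplication. -/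
section Aux
variable (p : ℕ) {R : Type*} [CommRing R]

/-- ℕ-indexed ghost components. -/
def ghostN (x : ℕ → R) (j : ℕ) : R :=
  ∑ i ∈ Finset.range (j + 1), (p : R) ^ i * x i ^ p ^ (j - i)

lemma pGhost_eq {n : ℕ} (x : Fin n → R) (j : Fin n) :
    pGhost p x j = ghostN p (fun i => if h : i < n then x ⟨i, h⟩ else 0) (j : ℕ) := by
  unfold pGhost ghostN
  refine Finset.sum_bij' (fun i _ => (i : ℕ)) (fun i hi => ⟨i, ?_⟩) ?_ ?_ ?_ ?_ ?_
  · exact lt_of_le_of_lt (Nat.lt_succ_iff.mp (Finset.mem_range.mp hi)) j.isLt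
  · intro i hi
    simp only [Finset.mem_Iic] at hi
    simpa [Nat.lt_succ_iff] using (Fin.le_def.mp hi)
  · intro i hi
    simp only [Finset.mem_range, Nat.lt_succ_iff] at hi
    simp [Finset.mem_Iic, Fin.le_def, hi]
  · intro i hi; rfl
  · intro i hi; rfl
  · intro i hi
    have hilt : (i : ℕ) < n := i.isLt
    simp [hilt]

lemma ghostN_key (φ : R →+* R) (hφ : ∀ r : R, φ r - r ^ p ∈ Ideal.span {(p : R)})
    (x : ℕ → R) (j : ℕ) :
    (p : R) ^ (j + 1) ∣ ghostN p x (j + 1) - φ (ghostN p x j) := by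
  have hmap : φ (ghostN p x j)
      = ∑ i ∈ Finset.range (j + 1), (p : R) ^ i * φ (x i) ^ p ^ (j - i) := by
    simp [ghostN, map_sum]
  rw [ghostN, Finset.sum_range_succ, hmap]
  have hsum : (∑ i ∈ Finset.range (j + 1), (p : R) ^ i * x i ^ p ^ (j + 1 - i))
        + (p : R) ^ (j + 1) * x (j + 1) ^ p ^ (j + 1 - (j + 1))
        - ∑ i ∈ Finset.range (j + 1), (p : R) ^ i * φ (x i) ^ p ^ (j - i)
      = (∑ i ∈ Finset.range (j + 1),
          (p : R) ^ i * (x i ^ p ^ (j + 1 - i) - φ (x i) ^ p ^ (j - i)))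
        + (p : R) ^ (j + 1) * x (j + 1) ^ p ^ (j + 1 - (j + 1)) := by
    rw [add_sub_right_comm, ← Finset.sum_sub_distrib]
    congr 1
    apply Finset.sum_congr rfl; intro i _; ring
  rw [hsum]
  refine dvd_add (Finset.dvd_sum ?_) (Dvd.intro _ rfl)
  intro i hi
  have hile : i ≤ j := Nat.lt_succ_iff.mp (Finset.mem_range.mp hi)
  have hpd : (p : R) ∣ φ (x i) - (x i) ^ p := by
    rw [← Ideal.mem_span_singleton]; exact hφ (x i)
  have hkey := dvd_sub_pow_of_dvd_sub hpd (j - i)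
  have he : j + 1 - i = (j - i) + 1 := by omega
  have hexp : x i ^ p ^ (j + 1 - i) = ((x i) ^ p) ^ p ^ (j - i) := by
    rw [he, pow_succ', pow_mul]
  rw [hexp]
  have : (p : R) ^ (j + 1) = (p : R) ^ i * (p : R) ^ (j - i + 1) := by
    rw [← pow_add]; congr 1; omega
  rw [this]
  exact mul_dvd_mul_left _ (dvd_sub_comm.mp hkey)

end Aux

section Main
variable (p : ℕ) {R : Type*} [CommRing R]

lemma ghostN_split (x : ℕ → R) (m : ℕ) :
    ghostN p x m = (∑ i ∈ Finset.range m, (p : R) ^ i * x i ^ p ^ (m - i)) + (p : R) ^ m * x m := by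
  unfold ghostN
  rw [Finset.sum_range_succ]
  simp

lemma ghostN_update_lt (x : ℕ → R) (c : R) (m j : ℕ) (hj : j < m) :
    ghostN p (Function.update x m c) j = ghostN p x j := by
  unfold ghostN
  apply Finset.sum_congr rfl
  intro i hi
  have hne : i ≠ m := by have := Finset.mem_range.mp hi; omega
  rw [Function.update_of_ne hne]

lemma ghostN_update_self (x : ℕ → R) (c : R) (m : ℕ) :
    ghostN p (Function.update x m c) m
      = (∑ i ∈ Finset.range m, (p : R) ^ i * x i ^ p ^ (m - i)) + (p : R) ^ m * c := by
  rw [ghostN_split]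
  congr 1
  · apply Finset.sum_congr rfl
    intro i hi
    rw [Function.update_of_ne (by have := Finset.mem_range.mp hi; omega)]
  · rw [Function.update_self]

lemma exists_preimage {n : ℕ} (φ : R →+* R)
    (hφ : ∀ r : R, φ r - r ^ p ∈ Ideal.span {(p : R)}) (b : Fin n → R)
    (hb : ∀ (j : ℕ) (h : j + 1 < n),
      (p : R) ^ (j + 1) ∣ b ⟨j + 1, h⟩ - φ (b ⟨j, Nat.lt_of_succ_lt h⟩)) :
    ∃ x : Fin n → R, pGhost p x = b := by
  suffices h : ∀ m : ℕ, ∃ x : Fin n → R, ∀ j : Fin n, (j : ℕ) < m → pGhost p x j = b j by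
    obtain ⟨x, hx⟩ := h n
    exact ⟨x, funext fun j => hx j j.isLt⟩
  intro m
  induction m with
  | zero => exact ⟨fun _ => 0, fun j hj => absurd hj (Nat.not_lt_zero _)⟩
  | succ m ih =>
    obtain ⟨x, hx⟩ := ih
    by_cases hm : m < n
    · set x' : ℕ → R := fun i => if h : i < n then x ⟨i, h⟩ else 0 with hx'
      have hdvd : (p : R) ^ m ∣ b ⟨m, hm⟩ - ghostN p x' m := by
        cases m with
        | zero => simpa using one_dvd _
        | succ k =>
          have h1 := hb k hm
          have h2 := ghostN_key p φ hφ x' k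
          have h3 : ghostN p x' k = b ⟨k, Nat.lt_of_succ_lt hm⟩ := by
            rw [← pGhost_eq p x ⟨k, Nat.lt_of_succ_lt hm⟩]
            exact hx _ (Nat.lt_succ_self k)
          have : b ⟨k + 1, hm⟩ - ghostN p x' (k + 1)
              = (b ⟨k + 1, hm⟩ - φ (b ⟨k, Nat.lt_of_succ_lt hm⟩))
                - (ghostN p x' (k + 1) - φ (ghostN p x' k)) := by
            rw [h3]; ring
          rw [this]
          exact dvd_sub h1 h2
      obtain ⟨d, hd⟩ := hdvd
      refine ⟨Function.update x ⟨m, hm⟩ (x' m + d), fun j hj => ?_⟩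
      have hext : (fun i => if h : i < n then (Function.update x ⟨m, hm⟩ (x' m + d)) ⟨i, h⟩ else 0)
          = Function.update x' m (x' m + d) := by
        funext i
        by_cases h : i < n
        · by_cases him : i = m
          · subst him
            simp only [dif_pos h]
            rw [show (⟨i, h⟩ : Fin n) = ⟨i, hm⟩ from rfl, Function.update_self,
              Function.update_self]
          · simp only [dif_pos h]
            rw [Function.update_of_ne (by simp [Fin.ext_iff, him]),
              Function.update_of_ne him, hx']
            simp [h]
        · rw [dif_neg h, Function.update_of_ne (show i ≠ m by rintro rfl; exact h hm), hx']
          simp [h]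
      rw [pGhost_eq, hext]
      rcases Nat.lt_succ_iff_lt_or_eq.mp hj with hj' | hj'
      · rw [ghostN_update_lt p x' _ m (j : ℕ) hj', ← pGhost_eq]
        exact hx j hj'
      · have : j = ⟨m, hm⟩ := Fin.ext hj'
        subst this
        rw [show ((⟨m, hm⟩ : Fin n) : ℕ) = m from rfl, ghostN_update_self]
        have hsplit := ghostN_split p x' m
        rw [mul_add, ← add_assoc, ← hsplit, ← hd]
        ring
    · exact ⟨x, fun j hj => hx j (by have := j.isLt; omega)⟩

lemma mem_range_iff {n : ℕ} (φ : R →+* R)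
    (hφ : ∀ r : R, φ r - r ^ p ∈ Ideal.span {(p : R)}) (b : Fin n → R) :
    b ∈ Set.range (pGhost p (R := R) (n := n)) ↔
      ∀ (j : ℕ) (h : j + 1 < n),
        (p : R) ^ (j + 1) ∣ b ⟨j + 1, h⟩ - φ (b ⟨j, Nat.lt_of_succ_lt h⟩) := by
  constructor
  · rintro ⟨x, rfl⟩ j h
    rw [pGhost_eq, pGhost_eq]
    exact ghostN_key p φ hφ _ j
  · exact fun hb => exists_preimage p φ hφ b hb

end Main

theorem stmt9 (p : ℕ) (hp : p.Prime) {R : Type*} [CommRing R] (φ : R →+* R)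
    (hφ : ∀ r : R, φ r - r ^ p ∈ Ideal.span {(p : R)}) (n : ℕ) (hn : 0 < n) :
    (fun _ : Fin n => (1 : R)) ∈ Set.range (pGhost p (R := R) (n := n)) ∧
      (∀ a b : Fin n → R, a ∈ Set.range (pGhost p (R := R) (n := n)) →
        b ∈ Set.range (pGhost p (R := R) (n := n)) →
        a - b ∈ Set.range (pGhost p (R := R) (n := n))) ∧
      (∀ a b : Fin n → R, a ∈ Set.range (pGhost p (R := R) (n := n)) →
        b ∈ Set.range (pGhost p (R := R) (n := n)) →
        a * b ∈ Set.range (pGhost p (R := R) (n := n))) := by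
  refine ⟨?_, ?_, ?_⟩
  · rw [mem_range_iff p φ hφ]
    intro j h
    simp
  · intro a b ha hb
    rw [mem_range_iff p φ hφ] at ha hb ⊢
    intro j h
    have key : (a - b) ⟨j + 1, h⟩ - φ ((a - b) ⟨j, Nat.lt_of_succ_lt h⟩)
        = (a ⟨j + 1, h⟩ - φ (a ⟨j, Nat.lt_of_succ_lt h⟩))
          - (b ⟨j + 1, h⟩ - φ (b ⟨j, Nat.lt_of_succ_lt h⟩)) := by
      simp [map_sub]; ring
    rw [key]
    exact dvd_sub (ha j h) (hb j h)
  · intro a b ha hb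
    rw [mem_range_iff p φ hφ] at ha hb ⊢
    intro j h
    have key : (a * b) ⟨j + 1, h⟩ - φ ((a * b) ⟨j, Nat.lt_of_succ_lt h⟩)
        = a ⟨j + 1, h⟩ * (b ⟨j + 1, h⟩ - φ (b ⟨j, Nat.lt_of_succ_lt h⟩))
          + φ (b ⟨j, Nat.lt_of_succ_lt h⟩) * (a ⟨j + 1, h⟩ - φ (a ⟨j, Nat.lt_of_succ_lt h⟩)) := by
      simp [map_mul]; ring
    rw [key]
    exact dvd_add ((hb j h).mul_left _) ((ha j h).mul_left _)
end

section
/- Let R be a torsion-free commutative ring, W a finite group, and X a set equipped with a W-action. Let R[X] denote the free R-module on X (finitely supported functions X → R), with W acting R-linearly by permuting the basis. Let D be the additive subgroup of R[X] generated by all elements w•q − q for w ∈ W and q ∈ R[X], and let N : R[X] → R[X] be the additive map N(q) = Σ_{w ∈ W} w•q. Then N vanishes on D and the induced map from the coinvariants R[X]/D to R[X] is injective; equivalently, N(q) = N(q′) implies q − q′ ∈ D. -/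
open scoped Classical

section Aux

variable {R W X : Type*} [CommRing R] [Group W] [Fintype W] [MulAction W X]

private lemma aux_mapDomain_sub {α β : Type*} (f : α → β) (a b : α →₀ R) :
    Finsupp.mapDomain f (a - b) = Finsupp.mapDomain f a - Finsupp.mapDomain f b :=
  map_sub (Finsupp.mapDomain.addMonoidHom f) a b

private lemma aux_mapDomain_neg {α β : Type*} (f : α → β) (a : α →₀ R) :
    Finsupp.mapDomain f (-a) = -Finsupp.mapDomain f a :=
  map_neg (Finsupp.mapDomain.addMonoidHom f) a

private lemma aux_N_gen (w : W) (q : X →₀ R) :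
    ∑ v : W, Finsupp.mapDomain (fun x => v • x)
      (Finsupp.mapDomain (fun x => w • x) q - q) = 0 := by
  have h : ∀ v : W, Finsupp.mapDomain (fun x => v • x) (Finsupp.mapDomain (fun x => w • x) q)
      = Finsupp.mapDomain (fun x => (v * w) • x) q := by
    intro v
    rw [← Finsupp.mapDomain_comp]
    congr 1
    funext x
    simp [Function.comp, mul_smul]
  simp only [aux_mapDomain_sub, h, Finset.sum_sub_distrib]
  rw [sub_eq_zero]
  exact Fintype.sum_equiv (Equiv.mulRight w) _ _ (fun v => rfl)

private lemma aux_N_zero {d : X →₀ R}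
    (hd : d ∈ AddSubgroup.closure
      {y : X →₀ R | ∃ (w : W) (q : X →₀ R), y = Finsupp.mapDomain (fun x => w • x) q - q}) :
    ∑ w : W, Finsupp.mapDomain (fun x => w • x) d = 0 := by
  induction hd using AddSubgroup.closure_induction with
  | mem y hy =>
    obtain ⟨w, q, rfl⟩ := hy
    exact aux_N_gen w q
  | zero => simp
  | add a b _ _ ha hb =>
    simp only [Finsupp.mapDomain_add, Finset.sum_add_distrib, ha, hb, add_zero]
  | neg a _ ha =>
    simp only [aux_mapDomain_neg]
    rw [Finset.sum_neg_distrib, ha, neg_zero]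

omit [Fintype W] in
private lemma aux_sub_out_mem (p : X →₀ R) :
    p - Finsupp.mapDomain
      (fun x => (Quotient.mk (MulAction.orbitRel W X) x).out) p ∈
    AddSubgroup.closure
      {y : X →₀ R | ∃ (w : W) (q : X →₀ R), y = Finsupp.mapDomain (fun x => w • x) q - q} := by
  induction p using Finsupp.induction with
  | zero => simp [AddSubgroup.zero_mem]
  | single_add a r f _ _ ih =>
    rw [Finsupp.mapDomain_add]
    have key : Finsupp.single a r -
        Finsupp.mapDomain (fun x => (Quotient.mk (MulAction.orbitRel W X) x).out)
          (Finsupp.single a r) ∈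
        AddSubgroup.closure
          {y : X →₀ R | ∃ (w : W) (q : X →₀ R), y = Finsupp.mapDomain (fun x => w • x) q - q} := by
      obtain ⟨w, hw⟩ : (Quotient.mk (MulAction.orbitRel W X) a).out ∈ MulAction.orbit W a :=
        Quotient.mk_out (s := MulAction.orbitRel W X) a
      rw [← neg_sub]
      refine AddSubgroup.neg_mem _ (AddSubgroup.subset_closure ?_)
      refine ⟨w, Finsupp.single a r, ?_⟩
      rw [Finsupp.mapDomain_single, Finsupp.mapDomain_single]
      exact congrArg (fun z => Finsupp.single z r - Finsupp.single a r) hw.symm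
    have : Finsupp.single a r + f -
        (Finsupp.mapDomain (fun x => (Quotient.mk (MulAction.orbitRel W X) x).out)
          (Finsupp.single a r) +
         Finsupp.mapDomain (fun x => (Quotient.mk (MulAction.orbitRel W X) x).out) f)
        = (Finsupp.single a r -
            Finsupp.mapDomain (fun x => (Quotient.mk (MulAction.orbitRel W X) x).out)
              (Finsupp.single a r)) +
          (f - Finsupp.mapDomain (fun x => (Quotient.mk (MulAction.orbitRel W X) x).out) f) := by
      abel
    rw [this]
    exact AddSubgroup.add_mem _ key ih

end Aux

theorem stmt11 {R W X : Type*} [CommRing R] [Group W] [Fintype W] [MulAction W X]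
    (htf : ∀ k : ℕ, 0 < k → ∀ r : R, k • r = 0 → r = 0) :
    (∀ d ∈ AddSubgroup.closure
        {y : X →₀ R | ∃ (w : W) (q : X →₀ R), y = Finsupp.mapDomain (fun x => w • x) q - q},
      ∑ w : W, Finsupp.mapDomain (fun x => w • x) d = 0) ∧
      ∀ q q' : X →₀ R,
        (∑ w : W, Finsupp.mapDomain (fun x => w • x) q) =
          (∑ w : W, Finsupp.mapDomain (fun x => w • x) q') →
        q - q' ∈ AddSubgroup.closure
          {y : X →₀ R | ∃ (w : W) (q : X →₀ R), y = Finsupp.mapDomain (fun x => w • x) q - q} := by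
  refine ⟨fun d hd => aux_N_zero hd, fun q q' hqq' => ?_⟩
  set p := q - q' with hp
  -- N p = 0
  have hNp : ∑ w : W, Finsupp.mapDomain (fun x => w • x) p = 0 := by
    simp only [hp, aux_mapDomain_sub, Finset.sum_sub_distrib, hqq', sub_self]
  -- push down to the orbit quotient
  have hπ : True := trivial
  let π : X → Quotient (MulAction.orbitRel W X) := Quotient.mk (MulAction.orbitRel W X)
  have hπw : ∀ (w : W) (x : X), π (w • x) = π x := by
    intro w x
    exact Quotient.sound ⟨w, rfl⟩
  have hSw : ∀ (w : W) (f : X →₀ R),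
      Finsupp.mapDomain π (Finsupp.mapDomain (fun x => w • x) f) = Finsupp.mapDomain π f := by
    intro w f
    rw [← Finsupp.mapDomain_comp]
    congr 1
    funext x
    exact hπw w x
  have hSp : (Fintype.card W) • Finsupp.mapDomain π p = 0 := by
    have := congrArg (Finsupp.mapDomain π) hNp
    rw [Finsupp.mapDomain_finset_sum] at this
    simp only [hSw] at this
    rwa [Finset.sum_const, Finset.card_univ, Finsupp.mapDomain_zero] at this
  have hS0 : Finsupp.mapDomain π p = 0 := by
    ext t
    have := congrArg (fun g : Quotient (MulAction.orbitRel W X) →₀ R => g t) hSp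
    simp only [Finsupp.smul_apply, Finsupp.coe_zero, Pi.zero_apply] at this
    exact htf (Fintype.card W) Fintype.card_pos _ this
  have hmap0 : Finsupp.mapDomain
      (fun x => (Quotient.mk (MulAction.orbitRel W X) x).out) p = 0 := by
    have heq : Finsupp.mapDomain Quotient.out (Finsupp.mapDomain π p)
        = Finsupp.mapDomain (fun x => (Quotient.mk (MulAction.orbitRel W X) x).out) p := by
      rw [← Finsupp.mapDomain_comp]
      rfl
    rw [← heq, hS0, Finsupp.mapDomain_zero]
  have h := aux_sub_out_mem (R := R) (W := W) p
  rwa [hmap0, sub_zero] at h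
end

section
/- Let R be a commutative ring and n a natural number. Let f, g : M₁ → M₀ be R-linear maps admitting a common R-linear section, and let q : M₀ → M be a coequalizer of f and g in the category of R-modules (so q is surjective with kernel equal to the set { f(a) − g(a) : a ∈ M₁ }). Then the n-fold tensor power q^{⊗n} : M₀^{⊗_R n} → M^{⊗_R n} is a coequalizer of f^{⊗n} and g^{⊗n} in the category of R-modules; in particular q^{⊗n} is surjective and every element of its kernel is of the form f^{⊗n}(x) − g^{⊗n}(x) for some x ∈ M₁^{⊗_R n}. -/
open TensorProduct LinearMap

/-- Tensor product of two reflexive-coequalizer situations. -/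
lemma auxStep14 {R : Type*} [CommRing R]
    {M₁ M₀ M N₁ N₀ N : Type*}
    [AddCommGroup M₁] [AddCommGroup M₀] [AddCommGroup M]
    [AddCommGroup N₁] [AddCommGroup N₀] [AddCommGroup N]
    [Module R M₁] [Module R M₀] [Module R M]
    [Module R N₁] [Module R N₀] [Module R N]
    (f g : M₁ →ₗ[R] M₀) (s : M₀ →ₗ[R] M₁)
    (hf : ∀ m, f (s m) = m) (hg : ∀ m, g (s m) = m)
    (q : M₀ →ₗ[R] M) (hqsurj : Function.Surjective q)
    (hqker : ∀ b : M₀, q b = 0 → ∃ a : M₁, b = f a - g a)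
    (F G : N₁ →ₗ[R] N₀) (S : N₀ →ₗ[R] N₁)
    (hF : ∀ m, F (S m) = m) (hG : ∀ m, G (S m) = m)
    (Q : N₀ →ₗ[R] N) (hQsurj : Function.Surjective Q)
    (hQker : ∀ b : N₀, Q b = 0 → ∃ a : N₁, b = F a - G a) :
    Function.Surjective (TensorProduct.map q Q) ∧
      ∀ y : M₀ ⊗[R] N₀, TensorProduct.map q Q y = 0 →
        ∃ x : M₁ ⊗[R] N₁,
          y = TensorProduct.map f F x - TensorProduct.map g G x := by
  constructor
  · exact TensorProduct.map_surjective hqsurj hQsurj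
  · have hker : LinearMap.ker (TensorProduct.map q Q) =
        LinearMap.range (LinearMap.lTensor M₀ (LinearMap.ker Q).subtype) ⊔
          LinearMap.range (LinearMap.rTensor N₀ (LinearMap.ker q).subtype) :=
      TensorProduct.map_ker q.exact_subtype_ker_map hqsurj Q.exact_subtype_ker_map hQsurj
    set D : M₁ ⊗[R] N₁ →ₗ[R] M₀ ⊗[R] N₀ :=
      TensorProduct.map f F - TensorProduct.map g G with hD
    have h1 : LinearMap.range (LinearMap.lTensor M₀ (LinearMap.ker Q).subtype) ≤
        LinearMap.range D := by
      rintro _ ⟨z, rfl⟩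
      induction z using TensorProduct.induction_on with
      | zero => simp
      | tmul m k =>
        obtain ⟨x, hx⟩ := hQker k.1 k.2
        refine ⟨s m ⊗ₜ x, ?_⟩
        simp [hD, hf, hg, hx, TensorProduct.tmul_sub]
      | add a b ha hb => rw [map_add]; exact add_mem ha hb
    have h2 : LinearMap.range (LinearMap.rTensor N₀ (LinearMap.ker q).subtype) ≤
        LinearMap.range D := by
      rintro _ ⟨z, rfl⟩
      induction z using TensorProduct.induction_on with
      | zero => simp
      | tmul k t =>
        obtain ⟨a, ha⟩ := hqker k.1 k.2
        refine ⟨a ⊗ₜ S t, ?_⟩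
        simp [hD, hF, hG, ha, TensorProduct.sub_tmul]
      | add a b ha hb => rw [map_add]; exact add_mem ha hb
    intro y hy
    have hmem : y ∈ LinearMap.range (LinearMap.lTensor M₀ (LinearMap.ker Q).subtype) ⊔
        LinearMap.range (LinearMap.rTensor N₀ (LinearMap.ker q).subtype) := by
      rw [← hker]
      exact LinearMap.mem_ker.mpr hy
    have : y ∈ LinearMap.range D := sup_le h1 h2 hmem
    obtain ⟨x, hx⟩ := this
    exact ⟨x, by rw [← hx]; simp [hD]⟩

/-- The splitting of one factor off a tensor power. -/
noncomputable def auxE14 (R : Type*) [CommRing R] (n : ℕ)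
    (A : Type*) [AddCommGroup A] [Module R A] :
    (A ⊗[R] (⨂[R] _ : Fin n, A)) ≃ₗ[R] ⨂[R] _ : Fin (n + 1), A :=
  (TensorProduct.congr
      (PiTensorProduct.subsingletonEquiv (0 : Fin 1)).symm
      (LinearEquiv.refl R _)).trans
    ((PiTensorProduct.tmulEquiv R A).trans
      (PiTensorProduct.reindex R (fun _ => A)
        (finSumFinEquiv.trans (finCongr (Nat.add_comm 1 n)))))

lemma auxE14_nat {R : Type*} [CommRing R] (n : ℕ)
    {A B : Type*} [AddCommGroup A] [AddCommGroup B] [Module R A] [Module R B]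
    (φ : A →ₗ[R] B) (z : A ⊗[R] (⨂[R] _ : Fin n, A)) :
    PiTensorProduct.map (fun _ : Fin (n + 1) => φ) (auxE14 R n A z) =
      auxE14 R n B (TensorProduct.map φ (PiTensorProduct.map fun _ : Fin n => φ) z) := by
  suffices h : (PiTensorProduct.map (fun _ : Fin (n + 1) => φ)) ∘ₗ (auxE14 R n A).toLinearMap =
      (auxE14 R n B).toLinearMap ∘ₗ
        TensorProduct.map φ (PiTensorProduct.map fun _ : Fin n => φ) from
    LinearMap.congr_fun h z
  apply TensorProduct.ext'
  intro a t
  induction t using PiTensorProduct.induction_on with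
  | smul_tprod c v =>
    simp only [LinearMap.comp_apply, TensorProduct.map_tmul, TensorProduct.tmul_smul,
      LinearMap.map_smul, LinearEquiv.coe_coe]
    congr 1
    simp only [auxE14, LinearEquiv.trans_apply, TensorProduct.congr_tmul,
      PiTensorProduct.subsingletonEquiv_symm_apply, LinearEquiv.refl_apply,
      PiTensorProduct.tmulEquiv_apply, PiTensorProduct.reindex_tprod,
      PiTensorProduct.map_tprod]
    congr 1
    funext i
    rcases h : (finSumFinEquiv.trans (finCongr (Nat.add_comm 1 n))).symm i with j | j <;> simp [h] <;> rw [Fin.fin_one_eq_zero j] <;> simp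
  | add x y hx hy =>
    simp only [TensorProduct.tmul_add, map_add, hx, hy]

lemma auxKey14 {R : Type*} [CommRing R] {A B : Type*} [AddCommGroup A] [AddCommGroup B]
    [Module R A] [Module R B] (φ : A →ₗ[R] B) (y : ⨂[R] _ : Fin 0, A) :
    PiTensorProduct.isEmptyEquiv (Fin 0)
        (PiTensorProduct.map (fun _ : Fin 0 => φ) y) =
      PiTensorProduct.isEmptyEquiv (Fin 0) y := by
  have : (PiTensorProduct.isEmptyEquiv (Fin 0)).toLinearMap ∘ₗ
      PiTensorProduct.map (fun _ : Fin 0 => φ) =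
      (PiTensorProduct.isEmptyEquiv (Fin 0)).toLinearMap := by
    ext x
    simp
  exact LinearMap.congr_fun this y

theorem stmt14 {R : Type*} [CommRing R] (n : ℕ)
    {M₁ M₀ M : Type*} [AddCommGroup M₁] [AddCommGroup M₀] [AddCommGroup M]
    [Module R M₁] [Module R M₀] [Module R M]
    (f g : M₁ →ₗ[R] M₀) (s : M₀ →ₗ[R] M₁)
    (hf : f.comp s = LinearMap.id) (hg : g.comp s = LinearMap.id)
    (q : M₀ →ₗ[R] M) (hqsurj : Function.Surjective q)
    (hqker : ∀ b : M₀, q b = 0 ↔ ∃ a : M₁, b = f a - g a) :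
    Function.Surjective (PiTensorProduct.map (fun _ : Fin n => q)) ∧
      ∀ y : PiTensorProduct R (fun _ : Fin n => M₀),
        PiTensorProduct.map (fun _ : Fin n => q) y = 0 →
        ∃ x : PiTensorProduct R (fun _ : Fin n => M₁),
          y = PiTensorProduct.map (fun _ : Fin n => f) x -
              PiTensorProduct.map (fun _ : Fin n => g) x := by
  have hf' : ∀ m, f (s m) = m := fun m => DFunLike.congr_fun hf m
  have hg' : ∀ m, g (s m) = m := fun m => DFunLike.congr_fun hg m
  -- section identities at level n
  have hsec : ∀ (k : ℕ) (y : ⨂[R] _ : Fin k, M₀),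
      PiTensorProduct.map (fun _ : Fin k => f)
        (PiTensorProduct.map (fun _ : Fin k => s) y) = y ∧
      PiTensorProduct.map (fun _ : Fin k => g)
        (PiTensorProduct.map (fun _ : Fin k => s) y) = y := by
    intro k y
    constructor <;>
    · rw [← LinearMap.comp_apply, ← PiTensorProduct.map_comp]
      simp only [hf, hg, PiTensorProduct.map_id, LinearMap.id_apply]
  induction n with
  | zero =>
    constructor
    · intro y
      refine ⟨(PiTensorProduct.isEmptyEquiv (Fin 0)).symm
        (PiTensorProduct.isEmptyEquiv (Fin 0) y), ?_⟩
      apply (PiTensorProduct.isEmptyEquiv (Fin 0)).injective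
      exact (auxKey14 q _).trans (by simp)
    · intro y hy
      have : PiTensorProduct.isEmptyEquiv (Fin 0) y = 0 := by
        rw [← auxKey14 q y, hy, map_zero]
      have hy0 : y = 0 := by
        apply (PiTensorProduct.isEmptyEquiv (Fin 0)).injective
        simpa using this
      exact ⟨0, by simp [hy0]⟩
  | succ n ih =>
    obtain ⟨ihsurj, ihker⟩ := ih
    obtain ⟨tsurj, tker⟩ := auxStep14 f g s hf' hg' q hqsurj
      (fun b hb => (hqker b).mp hb)
      (PiTensorProduct.map (fun _ : Fin n => f))
      (PiTensorProduct.map (fun _ : Fin n => g))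
      (PiTensorProduct.map (fun _ : Fin n => s))
      (fun m => (hsec n m).1) (fun m => (hsec n m).2)
      (PiTensorProduct.map (fun _ : Fin n => q)) ihsurj
      (fun b hb => (ihker b hb).imp (fun x hx => by rw [hx]))
    constructor
    · intro y
      obtain ⟨z, hz⟩ := tsurj ((auxE14 R n M).symm y)
      refine ⟨auxE14 R n M₀ z, ?_⟩
      rw [auxE14_nat, hz, LinearEquiv.apply_symm_apply]
    · intro y hy
      set z := (auxE14 R n M₀).symm y with hzdef
      have hz0 : TensorProduct.map q (PiTensorProduct.map (fun _ : Fin n => q)) z = 0 := by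
        apply (auxE14 R n M).injective
        rw [← auxE14_nat, hzdef, LinearEquiv.apply_symm_apply, hy, map_zero]
      obtain ⟨w, hw⟩ := tker z hz0
      refine ⟨auxE14 R n M₁ w, ?_⟩
      have : y = auxE14 R n M₀ z := by rw [hzdef, LinearEquiv.apply_symm_apply]
      rw [this, hw, map_sub, auxE14_nat, auxE14_nat]
end

section
/- Let f, g : A → B be homomorphisms of free abelian groups admitting a common section s : B → A, and let ε : B → C be a coequalizer of f and g (so ε is surjective with kernel equal to the set { f(a) − g(a) : a ∈ A }). If C is also a free abelian group, then the coequalizer is split: there exist group homomorphisms u : C → B and t : B → A with ε∘u = id_C, u∘ε = g∘t, and f∘t = id_B. -/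
theorem stmt15 {A B C : Type*} [AddCommGroup A] [AddCommGroup B] [AddCommGroup C]
    [Module.Free ℤ A] [Module.Free ℤ B] [Module.Free ℤ C]
    (f g : A →+ B) (s : B →+ A)
    (hfs : f.comp s = AddMonoidHom.id B) (hgs : g.comp s = AddMonoidHom.id B)
    (ε : B →+ C) (hsurj : Function.Surjective ε)
    (hker : ∀ b : B, ε b = 0 ↔ ∃ a : A, b = f a - g a) :
    ∃ (u : C →+ B) (t : B →+ A),
      ε.comp u = AddMonoidHom.id C ∧ u.comp ε = g.comp t ∧ f.comp t = AddMonoidHom.id B := by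
  classical
  obtain ⟨ι, bC⟩ := Module.Free.exists_basis (R := ℤ) (M := C)
  obtain ⟨κ, bB⟩ := Module.Free.exists_basis (R := ℤ) (M := B)
  -- choose preimages of the basis of C
  choose v hv using fun i : ι => hsurj (bC i)
  set uL : C →ₗ[ℤ] B := bC.constr ℤ v with huL
  have hu : ∀ i, uL (bC i) = v i := fun i => bC.constr_basis ℤ v i
  have hεu : ∀ c : C, ε (uL c) = c := by
    have : (ε.toIntLinearMap ∘ₗ uL) = LinearMap.id := by
      apply bC.ext
      intro i
      simp [hu, hv]
    intro c
    exact congrArg (fun φ : C →ₗ[ℤ] C => φ c) this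
  -- for each basis element of B, choose a correction
  have hk : ∀ j : κ, ∃ a : A, uL (ε (bB j)) - bB j = f a - g a := by
    intro j
    exact (hker _).1 (by rw [map_sub, hεu, sub_self])
  choose a ha using hk
  set tL : B →ₗ[ℤ] A :=
    s.toIntLinearMap + bB.constr ℤ (fun j => s (f (a j)) - a j) with htL
  have hfsb : ∀ b : B, f (s b) = b := fun b => congrArg (fun φ : B →+ B => φ b) hfs
  have hgsb : ∀ b : B, g (s b) = b := fun b => congrArg (fun φ : B →+ B => φ b) hgs
  have hft : ∀ b : B, f (tL b) = b := by
    have : (f.toIntLinearMap ∘ₗ tL) = LinearMap.id := by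
      apply bB.ext
      intro j
      simp [htL, bB.constr_basis, hfsb]
    intro b
    exact congrArg (fun φ : B →ₗ[ℤ] B => φ b) this
  have hgt : ∀ b : B, g (tL b) = uL (ε b) := by
    have : (g.toIntLinearMap ∘ₗ tL) = uL ∘ₗ ε.toIntLinearMap := by
      apply bB.ext
      intro j
      have := ha j
      simp only [htL, LinearMap.comp_apply, LinearMap.add_apply,
        AddMonoidHom.coe_toIntLinearMap, map_add, bB.constr_basis, map_sub, hgsb]
      rw [← this]
      abel
    intro b
    exact DFunLike.congr_fun this b
  refine ⟨uL.toAddMonoidHom, tL.toAddMonoidHom, ?_, ?_, ?_⟩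
  · ext c; exact hεu c
  · ext b; exact (hgt b).symm
  · ext b; exact hft b
end
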